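/- Let d ≥ 1, k ≥ 1, β > 0, Δ > 0, let w^1, …, w^k ∈ ℝ^d be unit vectors and u_1, …, u_k ∈ [−1, 1], and define w̄(ξ) = Σ_{ℓ=1}^k u_ℓ E_ξ[f'(⟨w^ℓ, X⟩)] w^ℓ, where f'(x) = β(1 − tanh²(βx)) and E_ξ is expectation over X ~ N(ξ, I_{d×d}). Fix ℓ₀ ∈ {1, …, k}. If ξ ∈ ℝ^d satisfies |⟨w^ℓ, ξ⟩| ≥ Δ for every ℓ ≠ ℓ₀, then ‖w̄(ξ) − a_{ℓ₀} w^{ℓ₀}‖₂ ≤ 8kβ e^{2β² − 2βΔ}, where a_{ℓ₀} = u_{ℓ₀} E_ξ[f'(⟨w^{ℓ₀}, X⟩)]. -/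

import Mathlib

open MeasureTheory ProbabilityTheory Real
open scoped NNReal RealInnerProductSpace

/-!
Each term with `ℓ ≠ ℓ₀` is controlled pointwise: `1 - tanh² t = cosh⁻² t ≤ 4 e^{-2|t|}`, and
`-|t| ≤ -s t` for the sign `s` of `β ⟨w, ξ⟩`. Integrating turns the right-hand side into the
moment generating function of `⟨w, X⟩ ~ N(⟨w, ξ⟩, ‖w‖²)` at `-2βs`, which is at most
`e^{2β² - 2β|⟨w, ξ⟩|}` for a unit vector `w`. The `k - 1` remaining terms then sum to at most
`4kβ e^{2β² - 2βΔ}`.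
-/

/-- The Gaussian measure on `EuclideanSpace ℝ (Fin d)` with mean `ξ` and covariance
`σ2` times the identity (i.e. i.i.d. `N(ξ i, σ2)` coordinates). -/
noncomputable def gaussE (d : ℕ) (ξ : EuclideanSpace ℝ (Fin d)) (σ2 : ℝ≥0) :
    Measure (EuclideanSpace ℝ (Fin d)) :=
  (Measure.pi fun i : Fin d => gaussianReal (ξ i) σ2).map
    (MeasurableEquiv.toLp 2 (Fin d → ℝ))

namespace Real

theorem one_sub_tanh_sq (x : ℝ) : 1 - tanh x ^ 2 = (cosh x ^ 2)⁻¹ := by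
  rw [tanh_eq_sinh_div_cosh, div_pow, sinh_sq]
  field_simp [(cosh_pos x).ne']
  ring

theorem one_sub_tanh_sq_nonneg (x : ℝ) : 0 ≤ 1 - tanh x ^ 2 := by
  rw [one_sub_tanh_sq]; positivity

theorem one_sub_tanh_sq_le (x : ℝ) : 1 - tanh x ^ 2 ≤ 4 * exp (-(2 * |x|)) := by
  have hcosh : exp |x| / 2 ≤ cosh x := by
    rw [← cosh_abs, cosh_eq]
    linarith [exp_pos (-|x|)]
  calc 1 - tanh x ^ 2 = (cosh x ^ 2)⁻¹ := one_sub_tanh_sq x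
    _ ≤ ((exp |x| / 2) ^ 2)⁻¹ := by gcongr
    _ = 4 * exp (-(2 * |x|)) := by
      rw [exp_neg, mul_comm 2, exp_mul]; norm_num; ring

end Real

section Gaussian

variable {d : ℕ}

theorem exp_mul_inner_toLp (w : EuclideanSpace ℝ (Fin d)) (c : ℝ) (x : Fin d → ℝ) :
    exp (c * ⟪w, MeasurableEquiv.toLp 2 (Fin d → ℝ) x⟫) = ∏ i, exp (c * w i * x i) := by
  rw [← exp_sum, PiLp.inner_apply, Finset.mul_sum]
  congr 1
  refine Finset.sum_congr rfl fun i _ ↦ ?_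
  simp only [MeasurableEquiv.toLp_apply, RCLike.inner_apply, conj_trivial]
  ring

theorem integrable_exp_mul_inner_gaussE (ξ w : EuclideanSpace ℝ (Fin d)) (v : ℝ≥0) (c : ℝ) :
    Integrable (fun x ↦ exp (c * ⟪w, x⟫)) (gaussE d ξ v) := by
  rw [gaussE, integrable_map_equiv]
  simp only [Function.comp_def, exp_mul_inner_toLp]
  exact Integrable.fintype_prod fun i ↦ integrable_exp_mul_gaussianReal (c * w i)

theorem mgf_inner_gaussE (ξ w : EuclideanSpace ℝ (Fin d)) (v : ℝ≥0) (c : ℝ) :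
    mgf (fun x ↦ ⟪w, x⟫) (gaussE d ξ v) c = exp (c * ⟪w, ξ⟫ + v * c ^ 2 * ‖w‖ ^ 2 / 2) := by
  have hcoord (i : Fin d) := congrFun (mgf_id_gaussianReal (μ := ξ i) (v := v)) (c * w i)
  simp only [mgf, id] at hcoord
  rw [mgf, gaussE, integral_map_equiv]
  simp only [exp_mul_inner_toLp]
  rw [integral_fintype_prod_eq_prod (fun i y ↦ exp (c * w i * y)),
    Finset.prod_congr rfl fun i _ ↦ hcoord i, ← exp_sum, EuclideanSpace.real_norm_sq_eq,
    PiLp.inner_apply]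
  congr 1
  simp only [Finset.sum_add_distrib, Finset.mul_sum, Finset.sum_div]
  congr 1 <;> refine Finset.sum_congr rfl fun i _ ↦ ?_
  · simp only [RCLike.inner_apply, conj_trivial]
    ring
  · ring

theorem integral_one_sub_tanh_sq_le (ξ w : EuclideanSpace ℝ (Fin d)) (v : ℝ≥0)
    (β : ℝ) :
    ∫ x, 1 - tanh (β * ⟪w, x⟫) ^ 2 ∂gaussE d ξ v
      ≤ 4 * exp (2 * v * β ^ 2 * ‖w‖ ^ 2 - 2 * |β * ⟪w, ξ⟫|) := by
  set s : ℝ := (SignType.sign (β * ⟪w, ξ⟫) : ℝ)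
  have hs : |s| ≤ 1 := by
    rcases lt_trichotomy (β * ⟪w, ξ⟫) 0 with h | h | h <;> simp [s, h]
  have hpoint (x) : 1 - tanh (β * ⟪w, x⟫) ^ 2 ≤ 4 * exp (-2 * β * s * ⟪w, x⟫) := by
    refine (one_sub_tanh_sq_le _).trans ?_
    gcongr 4 * exp ?_
    have : s * (β * ⟪w, x⟫) ≤ |β * ⟪w, x⟫| :=
      (le_abs_self _).trans (by rw [abs_mul]; exact mul_le_of_le_one_left (abs_nonneg _) hs)
    linarith
  calc ∫ x, 1 - tanh (β * ⟪w, x⟫) ^ 2 ∂gaussE d ξ v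
      ≤ ∫ x, 4 * exp (-2 * β * s * ⟪w, x⟫) ∂gaussE d ξ v :=
        integral_mono_of_nonneg (.of_forall fun _ ↦ one_sub_tanh_sq_nonneg _)
          ((integrable_exp_mul_inner_gaussE ξ w v _).const_mul 4) (.of_forall hpoint)
    _ = 4 * exp (-2 * β * s * ⟪w, ξ⟫ + v * (-2 * β * s) ^ 2 * ‖w‖ ^ 2 / 2) := by
      rw [integral_const_mul, ← mgf_inner_gaussE, mgf]
    _ ≤ 4 * exp (2 * v * β ^ 2 * ‖w‖ ^ 2 - 2 * |β * ⟪w, ξ⟫|) := by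
      have hsign : s * (β * ⟪w, ξ⟫) = |β * ⟪w, ξ⟫| := sign_mul_self _
      have hs2 : s ^ 2 ≤ 1 := by nlinarith [abs_nonneg s, sq_abs s]
      gcongr 4 * exp ?_
      have : 0 ≤ (v : ℝ) * β ^ 2 * ‖w‖ ^ 2 := by positivity
      nlinarith

theorem integral_mul_one_sub_tanh_sq_le (ξ w : EuclideanSpace ℝ (Fin d)) (hw : ‖w‖ = 1)
    {β : ℝ} (hβ : 0 ≤ β) :
    ∫ x, β * (1 - tanh (β * ⟪w, x⟫) ^ 2) ∂gaussE d ξ 1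
      ≤ 4 * β * exp (2 * β ^ 2 - 2 * β * |⟪w, ξ⟫|) := by
  rw [integral_const_mul, mul_comm 4, mul_assoc]
  gcongr
  refine (integral_one_sub_tanh_sq_le ξ w 1 β).trans_eq ?_
  rw [hw, abs_mul, abs_of_nonneg hβ, NNReal.coe_one]
  ring_nf

end Gaussian

theorem stmt14_general (d k : ℕ) (β Δ : ℝ) (hβ : 0 < β)
    (w : Fin k → EuclideanSpace ℝ (Fin d)) (hw : ∀ ℓ, ‖w ℓ‖ = 1)
    (u : Fin k → ℝ) (hu : ∀ ℓ, u ℓ ∈ Set.Icc (-1 : ℝ) 1)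
    (ξ : EuclideanSpace ℝ (Fin d)) (ℓ₀ : Fin k)
    (hξ : ∀ ℓ, ℓ ≠ ℓ₀ → Δ ≤ |⟪w ℓ, ξ⟫|) :
    ‖(∑ ℓ, (u ℓ * ∫ x, β * (1 - Real.tanh (β * ⟪w ℓ, x⟫) ^ 2) ∂(gaussE d ξ 1)) • w ℓ)
        - (u ℓ₀ * ∫ x, β * (1 - Real.tanh (β * ⟪w ℓ₀, x⟫) ^ 2) ∂(gaussE d ξ 1)) • w ℓ₀‖
      ≤ 8 * k * β * Real.exp (2 * β ^ 2 - 2 * β * Δ) := by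
  set I : Fin k → ℝ := fun ℓ ↦ ∫ x, β * (1 - tanh (β * ⟪w ℓ, x⟫) ^ 2) ∂gaussE d ξ 1
  have hterm (ℓ) (hℓ : ℓ ∈ Finset.univ.erase ℓ₀) :
      ‖(u ℓ * I ℓ) • w ℓ‖ ≤ 4 * β * exp (2 * β ^ 2 - 2 * β * Δ) := by
    have hI_nonneg : 0 ≤ I ℓ :=
      integral_nonneg fun _ ↦ mul_nonneg hβ.le (one_sub_tanh_sq_nonneg _)
    have hI_le : I ℓ ≤ 4 * β * exp (2 * β ^ 2 - 2 * β * Δ) := by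
      refine (integral_mul_one_sub_tanh_sq_le ξ (w ℓ) (hw ℓ) hβ.le).trans ?_
      gcongr
      exact hξ ℓ (Finset.ne_of_mem_erase hℓ)
    rw [norm_smul, hw ℓ, mul_one, norm_mul, Real.norm_of_nonneg hI_nonneg]
    exact (mul_le_of_le_one_left hI_nonneg (abs_le.2 (hu ℓ))).trans hI_le
  rw [← Finset.sum_erase_eq_sub (Finset.mem_univ ℓ₀)]
  calc ‖∑ ℓ ∈ Finset.univ.erase ℓ₀, (u ℓ * I ℓ) • w ℓ‖
      ≤ (Finset.univ.erase ℓ₀).card * (4 * β * exp (2 * β ^ 2 - 2 * β * Δ)) := by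
        simpa using norm_sum_le_of_le _ hterm
    _ ≤ k * (4 * β * exp (2 * β ^ 2 - 2 * β * Δ)) := by
        gcongr
        exact_mod_cast (Finset.card_le_univ _).trans (Fintype.card_fin k).le
    _ ≤ 8 * k * β * exp (2 * β ^ 2 - 2 * β * Δ) := by
        have : 0 ≤ k * β * exp (2 * β ^ 2 - 2 * β * Δ) := by positivity
        linear_combination 4 * this

/-- If `ξ` is far from normal to every `w^ℓ` with `ℓ ≠ ℓ₀`, then
`‖w̄(ξ) - a_{ℓ₀} w^{ℓ₀}‖ ≤ 8kβ e^{2β² - 2βΔ}` with `a_{ℓ₀} = u_{ℓ₀} E_ξ[f'(⟨w^{ℓ₀}, X⟩)]`. -/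
theorem stmt14 (d k : ℕ) (hd : 1 ≤ d) (hk : 1 ≤ k) (β Δ : ℝ) (hβ : 0 < β) (hΔ : 0 < Δ)
    (w : Fin k → EuclideanSpace ℝ (Fin d)) (hw : ∀ ℓ, ‖w ℓ‖ = 1)
    (u : Fin k → ℝ) (hu : ∀ ℓ, u ℓ ∈ Set.Icc (-1 : ℝ) 1)
    (ξ : EuclideanSpace ℝ (Fin d)) (ℓ₀ : Fin k)
    (hξ : ∀ ℓ, ℓ ≠ ℓ₀ → Δ ≤ |⟪w ℓ, ξ⟫|) :
    ‖(∑ ℓ, (u ℓ * ∫ x, β * (1 - Real.tanh (β * ⟪w ℓ, x⟫) ^ 2) ∂(gaussE d ξ 1)) • w ℓ)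
        - (u ℓ₀ * ∫ x, β * (1 - Real.tanh (β * ⟪w ℓ₀, x⟫) ^ 2) ∂(gaussE d ξ 1)) • w ℓ₀‖
      ≤ 8 * k * β * Real.exp (2 * β ^ 2 - 2 * β * Δ) :=
  stmt14_general d k β Δ hβ w hw u hu ξ ℓ₀ hξ
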